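/- arXiv:1003.3123 — 3 statements merged into one kernel-verified Lean document; each statement's English description precedes it below -/
import Mathlib

section
/- Let 𝒜 ⊆ M_n(ℂ) be a logmodular subalgebra. Then there exist complex scalars α_{ij} and β_{ij} for i, j ∈ {1,...,n} such that: each row of the matrix [α_{ij}] is a non-zero vector; each column of the matrix [β_{ij}] is a non-zero vector; for every i ∈ {1,...,n} the matrix Σ_k α_{ik} E_{i,k} (whose only possibly non-zero row is the i-th row, with entries α_{i1},...,α_{in}) belongs to 𝒜; and for every j ∈ {1,...,n} the matrix Σ_k β_{kj} E_{k,j} (whose only possibly non-zero column is the j-th column, with entries β_{1j},...,β_{nj}) belongs to 𝒜. -/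
open scoped ComplexOrder

/-- A (closed unital) subalgebra `A ⊆ Mₙ(ℂ)` is *logmodular* if the set
`{a* a : a ∈ A, a invertible in A}` is dense in the set of positive invertible
(i.e. positive definite) matrices. -/
def IsLogmodular {n : ℕ} (A : Subalgebra ℂ (Matrix (Fin n) (Fin n) ℂ)) : Prop :=
  ∀ b : Matrix (Fin n) (Fin n) ℂ, b.PosDef →
    b ∈ closure {x : Matrix (Fin n) (Fin n) ℂ |
      ∃ a ∈ A, (∃ a' ∈ A, a * a' = 1 ∧ a' * a = 1) ∧ x = star a * a}

/-! For the operator norm `‖cᴴ c‖ = ‖c cᴴ‖ = ‖c‖²`, so `c ↦ cᴴ c` and `c ↦ c cᴴ` are proper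
maps and send the closed algebra `A` to closed sets. Logmodularity puts every positive definite
`b` in the closure of `{aᴴ a : a ∈ A}`, and, applied to `b⁻¹` and followed by inversion
(`(aᴴ a)⁻¹ = a⁻¹ (a⁻¹)ᴴ` with `a⁻¹ ∈ A`), also in the closure of `{c cᴴ : c ∈ A}`. Hence every
positive semidefinite matrix, in particular `E_{ii}`, is both some `cᴴ c` and some `c cᴴ` with
`c ∈ A`. Finally `c cᴴ = E_{ii}` forces `c` to vanish off row `i` and not on it, and
`cᴴ c = E_{jj}` does the same for column `j`. -/

theorem isProperMap_of_norm_eq_mul_self {E F : Type*} [SeminormedAddCommGroup E]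
    [NormedAddCommGroup F] [ProperSpace E] [ProperSpace F] {f : E → F} (hf : Continuous f)
    (h : ∀ x, ‖f x‖ = ‖x‖ * ‖x‖) : IsProperMap f := by
  refine isProperMap_iff_tendsto_cocompact.2 ⟨hf, ?_⟩
  rw [← Metric.cobounded_eq_cocompact, ← Metric.cobounded_eq_cocompact,
    ← tendsto_norm_atTop_iff_cobounded]
  simp_rw [h]
  exact tendsto_norm_cobounded_atTop.atTop_mul_atTop₀ tendsto_norm_cobounded_atTop

namespace Matrix

section RCLike

variable {n 𝕜 : Type*} [RCLike 𝕜]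

open scoped Matrix.Norms.L2Operator in
theorem isClosedMap_conjTranspose_mul_self [Fintype n] [DecidableEq n] :
    IsClosedMap fun c : Matrix n n 𝕜 => cᴴ * c :=
  have := FiniteDimensional.proper_rclike 𝕜 (Matrix n n 𝕜)
  (isProperMap_of_norm_eq_mul_self (by fun_prop) fun _ =>
    CStarRing.norm_star_mul_self).isClosedMap

open scoped Matrix.Norms.L2Operator in
theorem isClosedMap_mul_conjTranspose_self [Fintype n] [DecidableEq n] :
    IsClosedMap fun c : Matrix n n 𝕜 => c * cᴴ :=
  have := FiniteDimensional.proper_rclike 𝕜 (Matrix n n 𝕜)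
  (isProperMap_of_norm_eq_mul_self (by fun_prop) fun _ =>
    CStarRing.norm_self_mul_star).isClosedMap

theorem PosSemidef.mem_closure_setOf_posDef [DecidableEq n] {b : Matrix n n 𝕜}
    (hb : b.PosSemidef) : b ∈ closure {x : Matrix n n 𝕜 | x.PosDef} := by
  have hcont : Continuous fun t : ℝ => b + t • (1 : Matrix n n 𝕜) := by fun_prop
  have hlim : Filter.Tendsto (fun t : ℝ => b + t • (1 : Matrix n n 𝕜))
      (nhdsWithin 0 (Set.Ioi 0)) (nhds b) := by
    simpa using (hcont.tendsto 0).mono_left nhdsWithin_le_nhds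
  exact mem_closure_of_tendsto hlim <| eventually_nhdsWithin_of_forall fun t ht =>
    PosDef.posSemidef_add hb (PosDef.one.smul ht)

theorem PosSemidef.mem_of_isClosed [DecidableEq n] {s : Set (Matrix n n 𝕜)} (hs : IsClosed s)
    (h : {x : Matrix n n 𝕜 | x.PosDef} ⊆ s) {b : Matrix n n 𝕜} (hb : b.PosSemidef) : b ∈ s :=
  closure_minimal h hs hb.mem_closure_setOf_posDef

theorem posSemidef_single_one [DecidableEq n] (i : n) : (single i i (1 : 𝕜)).PosSemidef := by
  rw [← diagonal_single, posSemidef_diagonal_iff]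
  intro j
  by_cases h : j = i <;> simp [h]

variable [Fintype n] [DecidableEq n] {c : Matrix n n 𝕜}

omit [DecidableEq n] in
theorem mul_conjTranspose_self_apply_self_eq_zero {a : n} : (c * cᴴ) a a = 0 ↔ c a = 0 := by
  rw [mul_apply']
  exact dotProduct_self_star_eq_zero

omit [DecidableEq n] in
theorem conjTranspose_mul_self_apply_self_eq_zero {b : n} :
    (cᴴ * c) b b = 0 ↔ (fun k => c k b) = 0 := by
  rw [mul_apply']
  exact dotProduct_star_self_eq_zero

theorem row_eq_zero_of_mul_conjTranspose_self_eq_single {i a : n}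
    (h : c * cᴴ = single i i 1) (ha : a ≠ i) : c a = 0 :=
  mul_conjTranspose_self_apply_self_eq_zero.mp <| by
    rw [h, single_apply_of_ne]
    exact fun h' => ha h'.1.symm

theorem row_ne_zero_of_mul_conjTranspose_self_eq_single {i : n}
    (h : c * cᴴ = single i i 1) : c i ≠ 0 := by
  rw [Ne, ← mul_conjTranspose_self_apply_self_eq_zero, h, single_apply_same]
  exact one_ne_zero

theorem col_eq_zero_of_conjTranspose_mul_self_eq_single {j b : n}
    (h : cᴴ * c = single j j 1) (hb : b ≠ j) : (fun k => c k b) = 0 :=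
  conjTranspose_mul_self_apply_self_eq_zero.mp <| by
    rw [h, single_apply_of_ne]
    exact fun h' => hb h'.1.symm

theorem col_ne_zero_of_conjTranspose_mul_self_eq_single {j : n}
    (h : cᴴ * c = single j j 1) : (fun k => c k j) ≠ 0 := by
  rw [Ne, ← conjTranspose_mul_self_apply_self_eq_zero, h, single_apply_same]
  exact one_ne_zero

end RCLike

variable {n α : Type*} [Fintype n] [DecidableEq n] [Semiring α] {c : Matrix n n α}

theorem sum_smul_single_row_eq_self {i : n} (h : ∀ a, a ≠ i → c a = 0) :
    ∑ k, c i k • single i k (1 : α) = c := by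
  ext a b
  by_cases ha : a = i
  · subst ha
    simp [sum_apply, single_apply]
  · simp [sum_apply, Ne.symm ha, h a ha]

theorem sum_smul_single_col_eq_self {j : n} (h : ∀ b, b ≠ j → (fun k => c k b) = 0) :
    ∑ k, c k j • single k j (1 : α) = c := by
  ext a b
  by_cases hb : b = j
  · subst hb
    simp [sum_apply, single_apply]
  · simp [sum_apply, Ne.symm hb, congrFun (h b hb) a]

end Matrix

open Matrix

namespace IsLogmodular

variable {n : ℕ} {A : Subalgebra ℂ (Matrix (Fin n) (Fin n) ℂ)}

theorem posDef_mem_closure_conjTranspose_mul_self (hlog : IsLogmodular A)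
    {b : Matrix (Fin n) (Fin n) ℂ} (hb : b.PosDef) :
    b ∈ closure ((fun c => cᴴ * c) '' A) :=
  closure_mono (by rintro _ ⟨a, ha, -, rfl⟩; exact ⟨a, ha, rfl⟩) (hlog b hb)

theorem posDef_mem_closure_mul_conjTranspose_self (hlog : IsLogmodular A)
    {b : Matrix (Fin n) (Fin n) ℂ} (hb : b.PosDef) :
    b ∈ closure ((fun c => c * cᴴ) '' A) := by
  have hinv : ContinuousAt Inv.inv b⁻¹ :=
    continuousAt_matrix_inv _ <| by
      rw [Ring.inverse_eq_inv']
      exact continuousAt_inv₀ hb.inv.det_pos.ne'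
  have hmem := mem_closure_image hinv (hlog b⁻¹ hb.inv)
  rw [nonsing_inv_nonsing_inv b hb.det_pos.ne'.isUnit] at hmem
  refine closure_mono ?_ hmem
  rintro _ ⟨_, ⟨a, -, ⟨a', ha', h, h'⟩, rfl⟩, rfl⟩
  refine ⟨a', ha', (inv_eq_right_inv ?_).symm⟩
  calc star a * a * (a' * a'ᴴ) = star a * (a * a') * a'ᴴ := by simp only [mul_assoc]
    _ = 1 := by
      rw [h, mul_one, star_eq_conjTranspose, ← conjTranspose_mul, h', conjTranspose_one]

theorem exists_conjTranspose_mul_self_eq (hlog : IsLogmodular A)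
    (hclosed : IsClosed (A : Set (Matrix (Fin n) (Fin n) ℂ)))
    {b : Matrix (Fin n) (Fin n) ℂ} (hb : b.PosSemidef) : ∃ c ∈ A, cᴴ * c = b :=
  have hs := isClosedMap_conjTranspose_mul_self _ hclosed
  hb.mem_of_isClosed hs fun _ hx =>
    hs.closure_subset (hlog.posDef_mem_closure_conjTranspose_mul_self hx)

theorem exists_mul_conjTranspose_self_eq (hlog : IsLogmodular A)
    (hclosed : IsClosed (A : Set (Matrix (Fin n) (Fin n) ℂ)))
    {b : Matrix (Fin n) (Fin n) ℂ} (hb : b.PosSemidef) : ∃ c ∈ A, c * cᴴ = b :=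
  have hs := isClosedMap_mul_conjTranspose_self _ hclosed
  hb.mem_of_isClosed hs fun _ hx =>
    hs.closure_subset (hlog.posDef_mem_closure_mul_conjTranspose_self hx)

end IsLogmodular

/-- If `A` is logmodular in `Mₙ(ℂ)` then there are scalars `α i k`, `β k j` such that every
row of `α` and every column of `β` is non-zero, and for each `i` the matrix
`∑ k, α i k • E i k` (supported on the `i`-th row) and for each `j` the matrix
`∑ k, β k j • E k j` (supported on the `j`-th column) belong to `A`. -/
theorem logmodular_row_and_column_elements
    {n : ℕ} (A : Subalgebra ℂ (Matrix (Fin n) (Fin n) ℂ))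
    (hclosed : IsClosed (A : Set (Matrix (Fin n) (Fin n) ℂ)))
    (hlog : IsLogmodular A) :
    ∃ α β : Matrix (Fin n) (Fin n) ℂ,
      (∀ i : Fin n, (fun k => α i k) ≠ 0) ∧
      (∀ j : Fin n, (fun k => β k j) ≠ 0) ∧
      (∀ i : Fin n, (∑ k : Fin n, α i k • Matrix.single i k (1 : ℂ)) ∈ A) ∧
      (∀ j : Fin n, (∑ k : Fin n, β k j • Matrix.single k j (1 : ℂ)) ∈ A) := by
  choose r hrA hr using fun i => hlog.exists_mul_conjTranspose_self_eq hclosed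
    (posSemidef_single_one (𝕜 := ℂ) i)
  choose s hsA hs using fun j => hlog.exists_conjTranspose_mul_self_eq hclosed
    (posSemidef_single_one (𝕜 := ℂ) j)
  refine ⟨of fun i k => r i i k, of fun k j => s j k j, fun i => ?_, fun j => ?_, fun i => ?_,
    fun j => ?_⟩
  · exact row_ne_zero_of_mul_conjTranspose_self_eq_single (hr i)
  · exact col_ne_zero_of_conjTranspose_mul_self_eq_single (c := s j) (hs j)
  · convert hrA i using 1
    exact sum_smul_single_row_eq_self fun _ =>
      row_eq_zero_of_mul_conjTranspose_self_eq_single (hr i)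
  · convert hsA j using 1
    exact sum_smul_single_col_eq_self fun _ =>
      col_eq_zero_of_conjTranspose_mul_self_eq_single (hs j)
end

section
/- Let 𝒜 ⊆ M_n(ℂ) be a logmodular subalgebra. Then for every positive semidefinite matrix b ∈ M_n(ℂ) there exist a, c ∈ 𝒜 such that b = a*a and b = c c*. -/
open scoped ComplexOrder

/-!
In the C*-norm of `Mₙ(ℂ)` we have `‖a* a‖ = ‖a a*‖ = ‖a‖²`, so on this proper space the maps
`a ↦ a* a` and `c ↦ c c*` are proper, hence closed; for closed `A` the sets `{a* a : a ∈ A}` and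
`{c c* : c ∈ A}` are therefore closed. Logmodularity puts every positive definite `b` in the first.
Applied to `b⁻¹`, it writes `b⁻¹` as a limit of `a* a` with `a` invertible in `A`, and inverting gives
`b` as a limit of `a⁻¹ (a⁻¹)*`, so `b` lies in the second. A positive semidefinite `b` is the limit
of the positive definite `b + ε • 1`.
-/

open Filter Topology Bornology

theorem isProperMap_of_tendsto_norm_cobounded {E F : Type*} [NormedAddCommGroup E] [ProperSpace E]
    [NormedAddCommGroup F] [ProperSpace F] {f : E → F} (hf : Continuous f)
    (h : Tendsto (fun x => ‖f x‖) (cobounded E) atTop) : IsProperMap f := by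
  refine isProperMap_iff_tendsto_cocompact.2 ⟨hf, ?_⟩
  rw [← Metric.cobounded_eq_cocompact, ← Metric.cobounded_eq_cocompact]
  exact tendsto_norm_atTop_iff_cobounded.1 h

section CStarRing

variable {E : Type*} [NonUnitalNormedRing E] [StarRing E] [CStarRing E] [ProperSpace E]

theorem isProperMap_star_mul_self : IsProperMap fun a : E => star a * a :=
  isProperMap_of_tendsto_norm_cobounded (continuous_star.mul continuous_id) <| by
    simpa only [CStarRing.norm_star_mul_self] using
      tendsto_norm_cobounded_atTop.atTop_mul_atTop₀ tendsto_norm_cobounded_atTop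

theorem isProperMap_mul_star_self : IsProperMap fun a : E => a * star a :=
  isProperMap_of_tendsto_norm_cobounded (continuous_id.mul continuous_star) <| by
    simpa only [CStarRing.norm_self_mul_star] using
      tendsto_norm_cobounded_atTop.atTop_mul_atTop₀ tendsto_norm_cobounded_atTop

end CStarRing

theorem Matrix.PosSemidef.mem_of_isClosed_s4 {n : Type*} [Fintype n] [DecidableEq n]
    {s : Set (Matrix n n ℂ)} (hs : IsClosed s) (hpos : ∀ x : Matrix n n ℂ, x.PosDef → x ∈ s)
    {b : Matrix n n ℂ} (hb : b.PosSemidef) : b ∈ s := by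
  have hlim : Tendsto (fun ε : ℝ => b + (ε : ℂ) • 1) (𝓝[>] 0) (𝓝 b) :=
    ((continuous_const.add (Complex.continuous_ofReal.smul continuous_const)).tendsto' 0 b
      (by simp)).mono_left nhdsWithin_le_nhds
  refine hs.mem_of_tendsto hlim (eventually_nhdsWithin_of_forall fun ε hε => hpos _ ?_)
  exact Matrix.PosDef.posSemidef_add hb (Matrix.PosDef.one.smul (Complex.zero_lt_real.2 hε))

open scoped Matrix.Norms.L2Operator

namespace IsLogmodular

variable {n : ℕ} {A : Subalgebra ℂ (Matrix (Fin n) (Fin n) ℂ)}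

theorem posDef_mem_image_star_mul_self (hA : IsClosed (A : Set (Matrix (Fin n) (Fin n) ℂ)))
    (hlog : IsLogmodular A) {b : Matrix (Fin n) (Fin n) ℂ} (hb : b.PosDef) :
    b ∈ (fun a => star a * a) '' (A : Set (Matrix (Fin n) (Fin n) ℂ)) := by
  refine (isProperMap_star_mul_self.isClosedMap _ hA).closure_subset (closure_mono ?_ (hlog b hb))
  rintro _ ⟨a, ha, -, rfl⟩
  exact ⟨a, ha, rfl⟩

theorem posDef_mem_image_mul_star_self (hA : IsClosed (A : Set (Matrix (Fin n) (Fin n) ℂ)))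
    (hlog : IsLogmodular A) {b : Matrix (Fin n) (Fin n) ℂ} (hb : b.PosDef) :
    b ∈ (fun c => c * star c) '' (A : Set (Matrix (Fin n) (Fin n) ℂ)) := by
  have hcont : ContinuousAt Inv.inv b⁻¹ :=
    continuousAt_matrix_inv _ (by
      rw [Ring.inverse_eq_inv']
      exact continuousAt_inv₀ hb.inv.det_pos.ne')
  have hb' := mem_closure_image hcont (hlog _ hb.inv)
  rw [Matrix.nonsing_inv_nonsing_inv b hb.det_pos.ne'.isUnit] at hb'
  refine (isProperMap_mul_star_self.isClosedMap _ hA).closure_subset (closure_mono ?_ hb')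
  rintro _ ⟨_, ⟨a, -, ⟨a', ha', h₁, h₂⟩, rfl⟩, rfl⟩
  refine ⟨a', ha', (Matrix.inv_eq_right_inv ?_).symm⟩
  rw [← mul_assoc, mul_assoc (star a), h₁, mul_one, ← star_mul, h₂, star_one]

end IsLogmodular

/-- If `A` is logmodular in `Mₙ(ℂ)`, then every positive semidefinite matrix `b` factors as
`b = a* a` and as `b = c c*` with `a, c ∈ A`. -/
theorem logmodular_posSemidef_factorization
    {n : ℕ} (A : Subalgebra ℂ (Matrix (Fin n) (Fin n) ℂ))
    (hclosed : IsClosed (A : Set (Matrix (Fin n) (Fin n) ℂ)))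
    (hlog : IsLogmodular A) :
    ∀ b : Matrix (Fin n) (Fin n) ℂ, b.PosSemidef →
      ∃ a ∈ A, ∃ c ∈ A, b = star a * a ∧ b = c * star c := by
  intro b hb
  obtain ⟨a, ha, rfl⟩ := hb.mem_of_isClosed_s4 (isProperMap_star_mul_self.isClosedMap _ hclosed)
    fun _ => hlog.posDef_mem_image_star_mul_self hclosed
  obtain ⟨c, hc, hac⟩ := hb.mem_of_isClosed_s4 (isProperMap_mul_star_self.isClosedMap _ hclosed)
    fun _ => hlog.posDef_mem_image_mul_star_self hclosed
  exact ⟨a, ha, c, hc, rfl, hac.symm⟩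
end

section
/- Fix k ∈ {1,...,n} and let A ⊆ P_{\{1,...,k\}} M_n(ℂ) be a set of matrices (each supported on the first k rows) such that E_{m,m} ∈ A for every m ∈ {1,...,k}, and such that for every nonempty subset {i_1,...,i_m} ⊆ {1,...,k} one has P_{\{i_1,...,i_m\}} A (1_n − P_{\{i_1,...,i_m\}}) ≠ {0}, i.e. there exists a ∈ A and indices i ∈ {i_1,...,i_m}, j ∉ {i_1,...,i_m} with a(i,j) ≠ 0. Then for every t ∈ {1,...,k} the subalgebra of M_n(ℂ) generated by A contains an element S such that S(t,l) ≠ 0 for some l ∈ {k+1,...,n}. -/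
/-!
Let `J` be the set of columns `j` such that some element of the generated algebra has a
nonzero `(t, j)` entry; it contains `t` because `E t t` is a generator. If `J` stayed inside
the first block, the exit hypothesis would give a generator `a` and `i ∈ J`, `j ∉ J` with
`a i j ≠ 0`. Taking `S` with `S t i ≠ 0`, the product `S * (E i i * a)` has `(t, j)` entry
`S t i * a i j ≠ 0` (the factor `E i i` rules out cancellation in the sum over the middle
index), so `j ∈ J` after all.
-/

namespace Matrix

variable {ι R : Type*} [Fintype ι] [DecidableEq ι] [Semiring R]

theorem mul_single_one_mul_apply (S a : Matrix ι ι R) (i t j : ι) :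
    (S * (single i i (1 : R) * a)) t j = S t i * a i j := by
  rw [← Matrix.mul_assoc, mul_apply, Finset.sum_eq_single i]
  · rw [mul_single_apply_same, mul_one]
  · intro x _ hx
    rw [mul_single_apply_of_ne _ _ _ _ _ hx, zero_mul]
  · simp

variable [NoZeroDivisors R]
  {S : Type*} [SetLike S (Matrix ι ι R)] [MulMemClass S (Matrix ι ι R)]

theorem exists_mem_apply_ne_zero_of_diagonal_unit {B : S} {T a : Matrix ι ι R} {t i j : ι}
    (hT : T ∈ B) (hTi : T t i ≠ 0) (hi : single i i (1 : R) ∈ B) (ha : a ∈ B)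
    (hij : a i j ≠ 0) : ∃ T' ∈ B, T' t j ≠ 0 :=
  ⟨T * (single i i 1 * a), mul_mem hT (mul_mem hi ha), by
    rw [mul_single_one_mul_apply]; exact mul_ne_zero hTi hij⟩

theorem exists_mem_apply_ne_zero_notMem [Nontrivial R] (B : S) (K : Set ι)
    (hdiag : ∀ i ∈ K, single i i (1 : R) ∈ B)
    (hexit : ∀ J : Finset ι, J.Nonempty → (J : Set ι) ⊆ K →
      ∃ a ∈ B, ∃ i ∈ J, ∃ j ∉ J, a i j ≠ 0)
    {t : ι} (ht : t ∈ K) : ∃ T ∈ B, ∃ l ∉ K, T t l ≠ 0 := by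
  classical
  by_contra! hstay
  let J : Finset ι := {j | ∃ T ∈ B, T t j ≠ 0}
  have hJ : ∀ j, j ∈ J ↔ ∃ T ∈ B, T t j ≠ 0 := by simp [J]
  have hJK : (J : Set ι) ⊆ K := fun j hj => by
    obtain ⟨T, hT, hTj⟩ := (hJ j).1 hj
    by_contra hjK
    exact hTj (hstay T hT j hjK)
  have htJ : t ∈ J := (hJ t).2 ⟨_, hdiag t ht, by simp⟩
  obtain ⟨a, ha, i, hiJ, j, hjJ, hij⟩ := hexit J ⟨t, htJ⟩ hJK
  obtain ⟨T, hT, hTi⟩ := (hJ i).1 hiJ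
  exact hjJ <| (hJ j).2 <|
    exists_mem_apply_ne_zero_of_diagonal_unit hT hTi (hdiag i (hJK hiJ)) ha hij

end Matrix

theorem generated_algebra_exits_first_block_general
    {n k : ℕ}
    (A : Set (Matrix (Fin n) (Fin n) ℂ))
    (hdiag : ∀ m : Fin n, (m : ℕ) < k → Matrix.single m m (1 : ℂ) ∈ A)
    (hexit : ∀ J : Finset (Fin n), J.Nonempty → (∀ i ∈ J, (i : ℕ) < k) →
      ∃ a ∈ A, ∃ i ∈ J, ∃ j ∉ J, a i j ≠ 0) :
    ∀ t : Fin n, (t : ℕ) < k →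
      ∃ S ∈ NonUnitalAlgebra.adjoin ℂ A, ∃ l : Fin n, k ≤ (l : ℕ) ∧ S t l ≠ 0 := by
  intro t ht
  have hA := NonUnitalAlgebra.subset_adjoin ℂ (s := A)
  obtain ⟨S, hS, l, hl, hSl⟩ := Matrix.exists_mem_apply_ne_zero_notMem
    (NonUnitalAlgebra.adjoin ℂ A) {m : Fin n | (m : ℕ) < k} (fun m hm => hA (hdiag m hm))
    (fun J hJ hJk => (hexit J hJ hJk).imp fun a ⟨haA, h⟩ => ⟨hA haA, h⟩) ht
  exact ⟨S, hS, l, not_lt.1 hl, hSl⟩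

/-- Fix `k ∈ {1, …, n}` and let `A` be a set of matrices supported on the first `k` rows,
containing the matrix units `E m m` for all `m < k`, and such that for every nonempty subset
`J ⊆ {1, …, k}` there are `a ∈ A`, `i ∈ J` and `j ∉ J` with `a i j ≠ 0`
(i.e. `P_J A (1 − P_J) ≠ {0}`). Then for every `t < k` the subalgebra of `Mₙ(ℂ)` generated
by `A` contains an element `S` with `S t l ≠ 0` for some `l ≥ k` (i.e. `l ∈ {k+1, …, n}`). -/
theorem generated_algebra_exits_first_block
    {n k : ℕ} (hk : 1 ≤ k) (hkn : k ≤ n)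
    (A : Set (Matrix (Fin n) (Fin n) ℂ))
    (hsupp : ∀ a ∈ A, ∀ i j : Fin n, k ≤ (i : ℕ) → a i j = 0)
    (hdiag : ∀ m : Fin n, (m : ℕ) < k → Matrix.single m m (1 : ℂ) ∈ A)
    (hexit : ∀ J : Finset (Fin n), J.Nonempty → (∀ i ∈ J, (i : ℕ) < k) →
      ∃ a ∈ A, ∃ i ∈ J, ∃ j ∉ J, a i j ≠ 0) :
    ∀ t : Fin n, (t : ℕ) < k →
      ∃ S ∈ NonUnitalAlgebra.adjoin ℂ A, ∃ l : Fin n, k ≤ (l : ℕ) ∧ S t l ≠ 0 :=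
  generated_algebra_exits_first_block_general A hdiag hexit
end
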